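/- Let γ be an affine isometry of a finite-dimensional Euclidean affine space A, and let E_1 be a γ-invariant affine subspace contained in Min(γ). Let E_2 be any affine orthogonal complement of E_1. Then (t^{−v_γ}∘γ)(E_2) = E_2, where t^{−v_γ} is translation by −v_γ. -/

import Mathlib

noncomputable section

variable {V : Type*} [NormedAddCommGroup V] [InnerProductSpace ℝ V] [FiniteDimensional ℝ V]

/-- `d_γ = inf_x d(x, γx)` for an affine isometry `γ` of the Euclidean affine space `V`. -/
def minDisp (γ : V ≃ᵃⁱ[ℝ] V) : ℝ := ⨅ x, dist x (γ x)

/-- `Min(γ) = {x : d(x, γx) = d_γ}`. -/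
def minSet (γ : V ≃ᵃⁱ[ℝ] V) : Set V := {x | dist x (γ x) = minDisp γ}

/-! The subspaces `E₁` and `E₂` meet in a point `p`, which `t^{-v} ∘ γ` fixes since `p ∈ Min(γ)`.
The linear part of `t^{-v} ∘ γ` is that of `γ`, an isometry preserving the direction of `E₁`,
hence also its orthogonal complement, the direction of `E₂`. An affine map fixing a point of `E₂`
and preserving its direction preserves `E₂`. -/

theorem AffineSubspace.map_direction_eq_self_of_image_eq {k W P : Type*} [Ring k]
    [AddCommGroup W] [Module k W] [AddTorsor W P] {f : P →ᵃ[k] P} {s : AffineSubspace k P}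
    (h : f '' s = s) : s.direction.map f.linear = s.direction := by
  rw [← map_direction, coe_injective (a₁ := s.map f) ((coe_map f s).trans h)]

theorem Submodule.map_orthogonal_eq_self {𝕜 E : Type*} [RCLike 𝕜] [NormedAddCommGroup E]
    [InnerProductSpace 𝕜 E] (e : E ≃ₗᵢ[𝕜] E) {K : Submodule 𝕜 E}
    (h : K.map (e.toLinearEquiv : E →ₗ[𝕜] E) = K) :
    Kᗮ.map (e.toLinearEquiv : E →ₗ[𝕜] E) = Kᗮ := by
  rw [K.map_orthogonal_equiv, h]

theorem AffineSubspace.map_eq_self_of_map_direction_eq {k W P : Type*} [Ring k] [AddCommGroup W]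
    [Module k W] [AddTorsor W P] {f : P →ᵃ[k] P} {s : AffineSubspace k P} {p : P} (hp : p ∈ s)
    (hfp : f p = p) (hd : s.direction.map f.linear = s.direction) : s.map f = s :=
  ext_of_direction_eq (by rw [map_direction, hd]) ⟨p, mem_map.2 ⟨p, hp, hfp⟩, hp⟩

theorem translate_comp_isometry_stabilizes_orthocomplement_general
    (γ : V ≃ᵃⁱ[ℝ] V) (v : V)
    (hv : ∀ x ∈ minSet γ, γ x = x + v)
    (E₁ E₂ : AffineSubspace ℝ V)
    (hE₁ne : (E₁ : Set V).Nonempty) (hE₂ne : (E₂ : Set V).Nonempty)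
    (hE₁min : (E₁ : Set V) ⊆ minSet γ)
    (hE₁inv : (fun x => γ x) '' (E₁ : Set V) = (E₁ : Set V))
    (hE₂dir : E₂.direction = E₁.directionᗮ) :
    (fun x => γ x - v) '' (E₂ : Set V) = (E₂ : Set V) := by
  obtain ⟨p, hp₁, hp₂⟩ := AffineSubspace.inter_nonempty_of_nonempty_of_sup_direction_eq_top
    hE₁ne hE₂ne (by rw [hE₂dir, Submodule.sup_orthogonal_of_hasOrthogonalProjection])
  let f : V →ᵃ[ℝ] V := γ.toAffineMap - AffineMap.const ℝ V v
  have hfp : f p = p := by simp [f, hv p (hE₁min hp₁)]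
  have hf : f.linear = γ.linearIsometryEquiv.toLinearEquiv := by
    simp [f, AffineMap.sub_linear]
  have hE₁dir : E₁.direction.map (γ.linearIsometryEquiv.toLinearEquiv : V →ₗ[ℝ] V) =
      E₁.direction :=
    AffineSubspace.map_direction_eq_self_of_image_eq (f := γ.toAffineMap) hE₁inv
  have hE₂dir' : E₂.direction.map f.linear = E₂.direction := by
    rw [hE₂dir, hf]
    exact Submodule.map_orthogonal_eq_self _ hE₁dir
  exact (AffineSubspace.coe_map f E₂).symm.trans
    (congrArg _ (AffineSubspace.map_eq_self_of_map_direction_eq hp₂ hfp hE₂dir'))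

/-- Let `γ` be an affine isometry of a finite-dimensional Euclidean affine
space, let `E₁` be a `γ`-invariant affine subspace contained in `Min(γ)`, and let `E₂` be an
affine orthogonal complement of `E₁` (an affine subspace whose direction is the orthogonal
complement of the direction of `E₁`).  Then `t^{-v_γ} ∘ γ` maps `E₂` onto `E₂`, where `v_γ`
is the vector by which `γ` translates `Min(γ)`. -/
theorem translate_comp_isometry_stabilizes_orthocomplement
    (γ : V ≃ᵃⁱ[ℝ] V) (v : V)
    (hMin : (minSet γ).Nonempty)
    (hv : ∀ x ∈ minSet γ, γ x = x + v)
    (E₁ E₂ : AffineSubspace ℝ V)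
    (hE₁ne : (E₁ : Set V).Nonempty) (hE₂ne : (E₂ : Set V).Nonempty)
    (hE₁min : (E₁ : Set V) ⊆ minSet γ)
    (hE₁inv : (fun x => γ x) '' (E₁ : Set V) = (E₁ : Set V))
    (hE₂dir : E₂.direction = E₁.directionᗮ) :
    (fun x => γ x - v) '' (E₂ : Set V) = (E₂ : Set V) :=
  translate_comp_isometry_stabilizes_orthocomplement_general γ v hv E₁ E₂ hE₁ne hE₂ne hE₁min hE₁inv
    hE₂dir

end
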